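/- Let r, t be positive integers with 2 ≤ t ≤ r−1 and n = 3r−t. If (r+5)/5 < t ≤ (2r+9)/9, then ρ_2(K(n,r)) = 4. -/
import Mathlib


open Finset

/-- The vertex set of the Kneser graph `K(n,r)`: the `r`-element subsets of `[n] = {1,…,n}`. -/
def KneserVerts (n r : ℕ) : Finset (Finset ℕ) := (Finset.Icc 1 n).powersetCard r

/-- Adjacency in a Kneser graph: distinct disjoint sets. -/
def KneserAdj (u v : Finset ℕ) : Prop := u ≠ v ∧ Disjoint u v

instance (u v : Finset ℕ) : Decidable (KneserAdj u v) := by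
  unfold KneserAdj; infer_instance

/-- `D` is a `k`-dominating set of `K(n,r)`: every vertex outside `D` has at least
`k` neighbours in `D`. -/
def IsKDomSet (n r k : ℕ) (D : Finset (Finset ℕ)) : Prop :=
  D ⊆ KneserVerts n r ∧
    ∀ v ∈ KneserVerts n r, v ∉ D → k ≤ (D.filter fun u => KneserAdj v u).card

/-- `D` is a `k`-tuple dominating set of `K(n,r)`: every vertex has at least `k`
vertices of `D` in its closed neighbourhood. -/
def IsKTupleDomSet (n r k : ℕ) (D : Finset (Finset ℕ)) : Prop :=
  D ⊆ KneserVerts n r ∧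
    ∀ v ∈ KneserVerts n r, k ≤ (D.filter fun u => u = v ∨ KneserAdj v u).card

/-- `D` is a `k`-tuple total dominating set of `K(n,r)`: every vertex has at least
`k` neighbours in `D`. -/
def IsKTupleTotalDomSet (n r k : ℕ) (D : Finset (Finset ℕ)) : Prop :=
  D ⊆ KneserVerts n r ∧
    ∀ v ∈ KneserVerts n r, k ≤ (D.filter fun u => KneserAdj v u).card

/-- The `k`-domination number `γ_k(K(n,r))`. -/
noncomputable def kdomNum (n r k : ℕ) : ℕ :=
  sInf {m | ∃ D, IsKDomSet n r k D ∧ D.card = m}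

/-- The `k`-tuple domination number `γ_{×k}(K(n,r))`. -/
noncomputable def ktupleDomNum (n r k : ℕ) : ℕ :=
  sInf {m | ∃ D, IsKTupleDomSet n r k D ∧ D.card = m}

/-- The `k`-tuple total domination number `γ_{×k,t}(K(n,r))`. -/
noncomputable def ktupleTotalDomNum (n r k : ℕ) : ℕ :=
  sInf {m | ∃ D, IsKTupleTotalDomSet n r k D ∧ D.card = m}

/-- `S` is a 2-packing of `K(n,r)`: any two distinct members are neither adjacent
nor have a common neighbour (i.e. are at distance at least 3). -/
def IsTwoPacking (n r : ℕ) (S : Finset (Finset ℕ)) : Prop :=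
  S ⊆ KneserVerts n r ∧
    ∀ u ∈ S, ∀ v ∈ S, u ≠ v →
      ¬ KneserAdj u v ∧ ∀ w ∈ KneserVerts n r, ¬ (KneserAdj u w ∧ KneserAdj w v)

/-- The 2-packing number `ρ₂(K(n,r))`. -/
noncomputable def twoPackingNum (n r : ℕ) : ℕ :=
  sSup {m | ∃ S, IsTwoPacking n r S ∧ S.card = m}

/-- A clique in a Kneser graph: a family of pairwise disjoint sets. -/
def IsKneserClique (D : Finset (Finset ℕ)) : Prop :=
  ∀ u ∈ D, ∀ v ∈ D, u ≠ v → Disjoint u v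

lemma count_aux (S : Finset (Finset ℕ)) :
    3 * ∑ A ∈ S, A.card ≤
      2 * (S.biUnion id).card + (∑ p ∈ S.offDiag, (p.1 ∩ p.2).card + ∑ A ∈ S, A.card) := by
  classical
  set U := S.biUnion id with hU
  have hsub : ∀ A ∈ S, A ⊆ U := fun A hA => Finset.subset_biUnion_of_mem id hA
  have hcard : ∀ A ∈ S, A.card = ∑ x ∈ U, if x ∈ A then 1 else 0 := by
    intro A hA
    rw [← Finset.card_filter]
    congr 1
    ext x
    simp only [Finset.mem_filter]
    exact ⟨fun h => ⟨hsub A hA h, h⟩, fun h => h.2⟩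
  have hsum1 : ∑ A ∈ S, A.card = ∑ x ∈ U, (S.filter (x ∈ ·)).card := by
    rw [Finset.sum_congr rfl hcard, Finset.sum_comm]
    refine Finset.sum_congr rfl fun x _ => ?_
    rw [Finset.card_filter]
  have hsum2 : ∑ p ∈ S ×ˢ S, (p.1 ∩ p.2).card
      = ∑ x ∈ U, (S.filter (x ∈ ·)).card * (S.filter (x ∈ ·)).card := by
    have h1 : ∀ p ∈ S ×ˢ S, (p.1 ∩ p.2).card
        = ∑ x ∈ U, (if x ∈ p.1 then 1 else 0) * (if x ∈ p.2 then 1 else 0) := by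
      rintro ⟨A, B⟩ hp
      rw [Finset.mem_product] at hp
      have h2 : (A ∩ B).card = (U.filter (fun x => x ∈ A ∧ x ∈ B)).card := by
        congr 1
        ext x
        simp only [Finset.mem_filter, Finset.mem_inter]
        exact ⟨fun h => ⟨hsub A hp.1 h.1, h⟩, fun h => h.2⟩
      show (A ∩ B).card = _
      rw [h2, Finset.card_filter]
      refine Finset.sum_congr rfl fun x _ => ?_
      by_cases hx1 : x ∈ A <;> by_cases hx2 : x ∈ B <;> simp [hx1, hx2]
    rw [Finset.sum_congr rfl h1, Finset.sum_comm]
    refine Finset.sum_congr rfl fun x _ => ?_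
    rw [Finset.sum_product]
    dsimp only
    rw [Finset.card_filter, Finset.sum_mul_sum]
  have hsplit : ∑ p ∈ S ×ˢ S, (p.1 ∩ p.2).card
      = ∑ p ∈ S.offDiag, (p.1 ∩ p.2).card + ∑ A ∈ S, A.card := by
    rw [← Finset.diag_union_offDiag S,
      Finset.sum_union (Finset.disjoint_diag_offDiag S), Finset.sum_diag]
    simp [add_comm]
  have hpt : ∀ x ∈ U, 3 * (S.filter (x ∈ ·)).card
      ≤ 2 + (S.filter (x ∈ ·)).card * (S.filter (x ∈ ·)).card := by
    intro x hx
    have h1 : 1 ≤ (S.filter (x ∈ ·)).card := by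
      rw [Finset.mem_biUnion] at hx
      obtain ⟨A, hA, hxA⟩ := hx
      exact Finset.card_pos.2 ⟨A, Finset.mem_filter.2 ⟨hA, hxA⟩⟩
    obtain ⟨k, hk⟩ := Nat.exists_eq_add_of_le h1
    have hkk : k ≤ k * k := by
      cases k with
      | zero => simp
      | succ m => exact Nat.le_mul_of_pos_left _ (Nat.succ_pos m)
    rw [hk]
    nlinarith [hkk]
  calc 3 * ∑ A ∈ S, A.card = ∑ x ∈ U, 3 * (S.filter (x ∈ ·)).card := by
        rw [hsum1, Finset.mul_sum]
    _ ≤ ∑ x ∈ U, (2 + (S.filter (x ∈ ·)).card * (S.filter (x ∈ ·)).card) :=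
        Finset.sum_le_sum hpt
    _ = 2 * U.card + ∑ x ∈ U, (S.filter (x ∈ ·)).card * (S.filter (x ∈ ·)).card := by
        rw [Finset.sum_add_distrib, Finset.sum_const, smul_eq_mul, mul_comm]
    _ = _ := by rw [← hsum2, hsplit]

lemma mem_KV {n r : ℕ} {u : Finset ℕ} :
    u ∈ KneserVerts n r ↔ u ⊆ Finset.Icc 1 n ∧ u.card = r := by
  simp [KneserVerts, Finset.mem_powersetCard]

lemma inter_lt_of_no_common {r t : ℕ} (hr : 1 ≤ r) (htr : t ≤ r) {u v : Finset ℕ}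
    (hu : u ∈ KneserVerts (3*r-t) r) (hv : v ∈ KneserVerts (3*r-t) r)
    (hno : ∀ w ∈ KneserVerts (3*r-t) r, ¬ (KneserAdj u w ∧ KneserAdj w v)) :
    (u ∩ v).card < t := by
  by_contra h
  push_neg at h
  rw [mem_KV] at hu hv
  set n := 3*r - t with hn
  have hcardn : (Finset.Icc 1 n).card = n := by rw [Nat.card_Icc]; omega
  have huv : u ∪ v ⊆ Finset.Icc 1 n := Finset.union_subset hu.1 hv.1
  have hcu : (u ∪ v).card + (u ∩ v).card = 2 * r := by
    rw [Finset.card_union_add_card_inter, hu.2, hv.2]; ring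
  have hiu : (u ∩ v).card ≤ r := by
    calc (u ∩ v).card ≤ u.card := Finset.card_le_card (Finset.inter_subset_left)
    _ = r := hu.2
  set X := Finset.Icc 1 n \ (u ∪ v) with hX
  have hXcard : X.card = n - (u ∪ v).card := by
    rw [hX, Finset.card_sdiff_of_subset huv, hcardn]
  have hrX : r ≤ X.card := by
    have hle : (u ∪ v).card ≤ n := le_trans (Finset.card_le_card huv) (le_of_eq hcardn)
    omega
  obtain ⟨w, hwX, hwcard⟩ := Finset.exists_subset_card_eq hrX
  have hwV : w ∈ KneserVerts n r := mem_KV.2 ⟨hwX.trans (Finset.sdiff_subset), hwcard⟩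
  have hdw : Disjoint w (u ∪ v) := Finset.sdiff_disjoint.mono_left hwX
  have hdu : Disjoint u w := (hdw.mono_right Finset.subset_union_left).symm
  have hdv : Disjoint w v := hdw.mono_right Finset.subset_union_right
  have hune : u ≠ w := by
    intro he
    rw [he] at hdu
    have := disjoint_self.mp hdu
    rw [this] at hwcard
    simp at hwcard; omega
  have hvne : w ≠ v := by
    intro he
    rw [he] at hdv
    have h0 := disjoint_self.mp hdv
    have hc := hv.2
    rw [h0] at hc
    simp at hc; omega
  exact hno w hwV ⟨⟨hune, hdu⟩, ⟨hvne, hdv⟩⟩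

lemma pair_ok {r t s : ℕ} (htr : t ≤ r) (h1 : 1 ≤ s) (hst : s < t) {A B : Finset ℕ}
    (hA : A ∈ KneserVerts (3*r-t) r) (hB : B ∈ KneserVerts (3*r-t) r)
    (hcap : (A ∩ B).card = s) :
    ¬ KneserAdj A B ∧ ∀ w ∈ KneserVerts (3*r-t) r, ¬ (KneserAdj A w ∧ KneserAdj w B) := by
  rw [mem_KV] at hA hB
  set n := 3*r - t with hn
  have hcardn : (Finset.Icc 1 n).card = n := by rw [Nat.card_Icc]; omega
  constructor
  · rintro ⟨-, hd⟩
    rw [Finset.disjoint_iff_inter_eq_empty] at hd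
    rw [hd] at hcap
    simp at hcap
    omega
  · rintro w hw ⟨⟨-, hdA⟩, ⟨-, hdB⟩⟩
    rw [mem_KV] at hw
    have hcu : (A ∪ B).card + s = 2 * r := by
      rw [← hcap, Finset.card_union_add_card_inter, hA.2, hB.2]; ring
    have hdisj : Disjoint (A ∪ B) w := by
      rw [Finset.disjoint_union_left]
      exact ⟨hdA, hdB.symm⟩
    have hsub : (A ∪ B) ∪ w ⊆ Finset.Icc 1 n :=
      Finset.union_subset (Finset.union_subset hA.1 hB.1) hw.1
    have hle : ((A ∪ B) ∪ w).card ≤ n := le_trans (Finset.card_le_card hsub) (le_of_eq hcardn)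
    rw [Finset.card_union_of_disjoint hdisj, hw.2] at hle
    omega

lemma exists_packing_four {r t s p : ℕ} (htr : t ≤ r) (hs1 : 1 ≤ s) (hst : s < t)
    (hsp : 3*s + p = r) (hn : 6*s + 4*p ≤ 3*r - t) :
    ∃ S, (S ⊆ KneserVerts (3*r-t) r ∧
      ∀ u ∈ S, ∀ v ∈ S, u ≠ v →
        ¬ KneserAdj u v ∧ ∀ w ∈ KneserVerts (3*r-t) r, ¬ (KneserAdj u w ∧ KneserAdj w v)) ∧
      S.card = 4 := by
  classical
  set n := 3*r - t with hnn
  set A1 : Finset ℕ := Finset.Ioc 0 (3*s) ∪ Finset.Ioc (6*s) (6*s+p) with hA1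
  set A2 : Finset ℕ := Finset.Ioc 0 s ∪ Finset.Ioc (3*s) (5*s) ∪ Finset.Ioc (6*s+p) (6*s+2*p) with hA2
  set A3 : Finset ℕ := Finset.Ioc s (2*s) ∪ Finset.Ioc (3*s) (4*s) ∪ Finset.Ioc (5*s) (6*s)
      ∪ Finset.Ioc (6*s+2*p) (6*s+3*p) with hA3
  set A4 : Finset ℕ := Finset.Ioc (2*s) (3*s) ∪ Finset.Ioc (4*s) (6*s)
      ∪ Finset.Ioc (6*s+3*p) (6*s+4*p) with hA4
  have m1 : ∀ x, x ∈ A1 ↔ (0 < x ∧ x ≤ 3*s) ∨ (6*s < x ∧ x ≤ 6*s+p) := by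
    intro x; simp [hA1, Finset.mem_union, Finset.mem_Ioc]
  have m2 : ∀ x, x ∈ A2 ↔ (0 < x ∧ x ≤ s) ∨ (3*s < x ∧ x ≤ 5*s) ∨ (6*s+p < x ∧ x ≤ 6*s+2*p) := by
    intro x; simp [hA2, Finset.mem_union, Finset.mem_Ioc, or_assoc]
  have m3 : ∀ x, x ∈ A3 ↔ (s < x ∧ x ≤ 2*s) ∨ (3*s < x ∧ x ≤ 4*s) ∨ (5*s < x ∧ x ≤ 6*s)
      ∨ (6*s+2*p < x ∧ x ≤ 6*s+3*p) := by
    intro x; simp [hA3, Finset.mem_union, Finset.mem_Ioc, or_assoc]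
  have m4 : ∀ x, x ∈ A4 ↔ (2*s < x ∧ x ≤ 3*s) ∨ (4*s < x ∧ x ≤ 6*s)
      ∨ (6*s+3*p < x ∧ x ≤ 6*s+4*p) := by
    intro x; simp [hA4, Finset.mem_union, Finset.mem_Ioc, or_assoc]
  -- cards
  have card1 : A1.card = r := by
    rw [hA1, Finset.card_union_of_disjoint, Nat.card_Ioc, Nat.card_Ioc]
    · omega
    · simp only [Finset.disjoint_left, Finset.mem_Ioc]; omega
  have card2 : A2.card = r := by
    rw [hA2, Finset.card_union_of_disjoint, Finset.card_union_of_disjoint,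
      Nat.card_Ioc, Nat.card_Ioc, Nat.card_Ioc]
    · omega
    · simp only [Finset.disjoint_left, Finset.mem_Ioc]; omega
    · simp only [Finset.disjoint_left, Finset.mem_union, Finset.mem_Ioc]; omega
  have card3 : A3.card = r := by
    rw [hA3, Finset.card_union_of_disjoint, Finset.card_union_of_disjoint,
      Finset.card_union_of_disjoint, Nat.card_Ioc, Nat.card_Ioc, Nat.card_Ioc, Nat.card_Ioc]
    · omega
    · simp only [Finset.disjoint_left, Finset.mem_Ioc]; omega
    · simp only [Finset.disjoint_left, Finset.mem_union, Finset.mem_Ioc]; omega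
    · simp only [Finset.disjoint_left, Finset.mem_union, Finset.mem_Ioc]; omega
  have card4 : A4.card = r := by
    rw [hA4, Finset.card_union_of_disjoint, Finset.card_union_of_disjoint,
      Nat.card_Ioc, Nat.card_Ioc, Nat.card_Ioc]
    · omega
    · simp only [Finset.disjoint_left, Finset.mem_Ioc]; omega
    · simp only [Finset.disjoint_left, Finset.mem_union, Finset.mem_Ioc]; omega
  -- membership in KneserVerts
  have hv1 : A1 ∈ KneserVerts n r := by
    rw [mem_KV]
    refine ⟨fun x hx => ?_, card1⟩
    rw [m1] at hx; rw [Finset.mem_Icc]; omega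
  have hv2 : A2 ∈ KneserVerts n r := by
    rw [mem_KV]
    refine ⟨fun x hx => ?_, card2⟩
    rw [m2] at hx; rw [Finset.mem_Icc]; omega
  have hv3 : A3 ∈ KneserVerts n r := by
    rw [mem_KV]
    refine ⟨fun x hx => ?_, card3⟩
    rw [m3] at hx; rw [Finset.mem_Icc]; omega
  have hv4 : A4 ∈ KneserVerts n r := by
    rw [mem_KV]
    refine ⟨fun x hx => ?_, card4⟩
    rw [m4] at hx; rw [Finset.mem_Icc]; omega
  -- intersections
  have i12 : A1 ∩ A2 = Finset.Ioc 0 s := by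
    ext x; rw [Finset.mem_inter, m1, m2, Finset.mem_Ioc]; omega
  have i13 : A1 ∩ A3 = Finset.Ioc s (2*s) := by
    ext x; rw [Finset.mem_inter, m1, m3, Finset.mem_Ioc]; omega
  have i14 : A1 ∩ A4 = Finset.Ioc (2*s) (3*s) := by
    ext x; rw [Finset.mem_inter, m1, m4, Finset.mem_Ioc]; omega
  have i23 : A2 ∩ A3 = Finset.Ioc (3*s) (4*s) := by
    ext x; rw [Finset.mem_inter, m2, m3, Finset.mem_Ioc]; omega
  have i24 : A2 ∩ A4 = Finset.Ioc (4*s) (5*s) := by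
    ext x; rw [Finset.mem_inter, m2, m4, Finset.mem_Ioc]; omega
  have i34 : A3 ∩ A4 = Finset.Ioc (5*s) (6*s) := by
    ext x; rw [Finset.mem_inter, m3, m4, Finset.mem_Ioc]; omega
  have c12 : (A1 ∩ A2).card = s := by rw [i12, Nat.card_Ioc]; omega
  have c13 : (A1 ∩ A3).card = s := by rw [i13, Nat.card_Ioc]; omega
  have c14 : (A1 ∩ A4).card = s := by rw [i14, Nat.card_Ioc]; omega
  have c23 : (A2 ∩ A3).card = s := by rw [i23, Nat.card_Ioc]; omega
  have c24 : (A2 ∩ A4).card = s := by rw [i24, Nat.card_Ioc]; omega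
  have c34 : (A3 ∩ A4).card = s := by rw [i34, Nat.card_Ioc]; omega
  have c21 : (A2 ∩ A1).card = s := by rw [Finset.inter_comm]; exact c12
  have c31 : (A3 ∩ A1).card = s := by rw [Finset.inter_comm]; exact c13
  have c41 : (A4 ∩ A1).card = s := by rw [Finset.inter_comm]; exact c14
  have c32 : (A3 ∩ A2).card = s := by rw [Finset.inter_comm]; exact c23
  have c42 : (A4 ∩ A2).card = s := by rw [Finset.inter_comm]; exact c24
  have c43 : (A4 ∩ A3).card = s := by rw [Finset.inter_comm]; exact c34
  -- distinctness
  have hdist : ∀ (A B : Finset ℕ), A.card = r → (A ∩ B).card = s → A ≠ B := by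
    intro A B hAc hABc he
    subst he
    rw [Finset.inter_self] at hABc
    omega
  have d12 : A1 ≠ A2 := hdist _ _ card1 c12
  have d13 : A1 ≠ A3 := hdist _ _ card1 c13
  have d14 : A1 ≠ A4 := hdist _ _ card1 c14
  have d23 : A2 ≠ A3 := hdist _ _ card2 c23
  have d24 : A2 ≠ A4 := hdist _ _ card2 c24
  have d34 : A3 ≠ A4 := hdist _ _ card3 c34
  refine ⟨{A1, A2, A3, A4}, ⟨?_, ?_⟩, ?_⟩
  · intro u hu
    simp only [Finset.mem_insert, Finset.mem_singleton] at hu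
    rcases hu with rfl|rfl|rfl|rfl
    exacts [hv1, hv2, hv3, hv4]
  · intro u hu v hv hne
    simp only [Finset.mem_insert, Finset.mem_singleton] at hu hv
    rcases hu with rfl|rfl|rfl|rfl <;> rcases hv with rfl|rfl|rfl|rfl <;>
      first
        | exact absurd rfl hne
        | exact pair_ok htr hs1 hst hv1 hv2 c12
        | exact pair_ok htr hs1 hst hv1 hv3 c13
        | exact pair_ok htr hs1 hst hv1 hv4 c14
        | exact pair_ok htr hs1 hst hv2 hv3 c23
        | exact pair_ok htr hs1 hst hv2 hv4 c24
        | exact pair_ok htr hs1 hst hv3 hv4 c34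
        | exact pair_ok htr hs1 hst hv2 hv1 c21
        | exact pair_ok htr hs1 hst hv3 hv1 c31
        | exact pair_ok htr hs1 hst hv4 hv1 c41
        | exact pair_ok htr hs1 hst hv3 hv2 c32
        | exact pair_ok htr hs1 hst hv4 hv2 c42
        | exact pair_ok htr hs1 hst hv4 hv3 c43
  · rw [Finset.card_insert_of_notMem, Finset.card_insert_of_notMem,
      Finset.card_insert_of_notMem, Finset.card_singleton]
    · simp [d34]
    · simp [d23, d24]
    · simp [d12, d13, d14]

theorem stmt_17 (r t : ℕ) (hr : 1 ≤ r) (ht2 : 2 ≤ t) (htr : t ≤ r - 1)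
    (ht1 : r + 5 < 5 * t) (ht2' : 9 * t ≤ 2 * r + 9) :
    twoPackingNum (3 * r - t) r = 4 := by
  classical
  have htr' : t ≤ r := by omega
  have ht3 : 3 ≤ t := by omega
  have hrt : t + 6 ≤ r := by omega
  set n := 3 * r - t with hn
  have hcardn : (Finset.Icc 1 n).card = n := by rw [Nat.card_Icc]; omega
  -- upper bound: every 2-packing has at most 4 elements
  have hub : ∀ m ∈ {m | ∃ S, IsTwoPacking n r S ∧ S.card = m}, m ≤ 4 := by
    rintro m ⟨S, hS, rfl⟩
    by_contra hm
    push_neg at hm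
    obtain ⟨S', hS'sub, hS'card⟩ := Finset.exists_subset_card_eq (show 5 ≤ S.card from hm)
    have hmem : ∀ A ∈ S', A ∈ KneserVerts n r := fun A hA => hS.1 (hS'sub hA)
    have hAcard : ∀ A ∈ S', A.card = r := fun A hA => (mem_KV.1 (hmem A hA)).2
    have hsum : ∑ A ∈ S', A.card = 5 * r := by
      rw [Finset.sum_congr rfl hAcard, Finset.sum_const, hS'card, smul_eq_mul]
    have hUcard : (S'.biUnion id).card ≤ n := by
      refine le_trans (Finset.card_le_card ?_) (le_of_eq hcardn)
      exact Finset.biUnion_subset.2 fun A hA => (mem_KV.1 (hmem A hA)).1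
    have hpair : ∀ p ∈ S'.offDiag, (p.1 ∩ p.2).card ≤ t - 1 := by
      rintro ⟨A, B⟩ hp
      rw [Finset.mem_offDiag] at hp
      obtain ⟨hA, hB, hne⟩ := hp
      have hno := (hS.2 A (hS'sub hA) B (hS'sub hB) hne).2
      have h2 := inter_lt_of_no_common hr htr' (hmem A hA) (hmem B hB) hno
      show (A ∩ B).card ≤ t - 1
      omega
    have hoff : ∑ p ∈ S'.offDiag, (p.1 ∩ p.2).card ≤ 20 * (t - 1) := by
      calc ∑ p ∈ S'.offDiag, (p.1 ∩ p.2).card ≤ S'.offDiag.card • (t - 1) :=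
            Finset.sum_le_card_nsmul _ _ _ hpair
        _ = 20 * (t - 1) := by rw [Finset.offDiag_card, hS'card]; simp
    have hkey := count_aux S'
    rw [hsum] at hkey
    omega
  -- lower bound: a 2-packing of size 4 exists
  have h4 : 4 ∈ {m | ∃ S, IsTwoPacking n r S ∧ S.card = m} := by
    obtain ⟨S, hS, hc⟩ := exists_packing_four (r := r) (t := t) (s := (r+t+5)/6)
      (p := r - 3*((r+t+5)/6)) htr' (by omega) (by omega) (by omega) (by omega)
    exact ⟨S, hS, hc⟩
  refine le_antisymm (csSup_le ⟨4, h4⟩ hub) (le_csSup ⟨4, fun m hm => hub m hm⟩ h4)
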